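/- arXiv:2504.15451 — 2 statements merged into one kernel-verified Lean document; each statement's English description precedes it below -/
import Mathlib

section
/- For any continuous f : Ω → ℂ and any 1 ≤ λ < ∞, the operator norm of M_f K on L^λ(μ) equals the supremum norm of (L|f|^λ)^{1/λ}, i.e., sup_{‖g‖_λ = 1} ‖f · (g∘σ)‖_λ = ‖(L|f|^λ)^{1/λ}‖_∞. -/
open MeasureTheory ENNReal

noncomputable section

/-- The shift map on `Ω = {0,1}^ℕ`. -/
def shift (x : ℕ → Bool) : ℕ → Bool := fun n => x (n + 1)

/-- Prepending a symbol: `cons b x = bx`. -/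
def cons (b : Bool) (x : ℕ → Bool) : ℕ → Bool := fun n => Nat.casesOn n b x

/-- `μ` is the Bernoulli(1/2,1/2) product measure on `{0,1}^ℕ`. -/
def IsBernoulliHalf (μ : Measure (ℕ → Bool)) : Prop :=
  ∀ (s : Finset ℕ) (b : ℕ → Bool),
    μ {x | ∀ i ∈ s, x i = b i} = (1 / 2 : ℝ≥0∞) ^ s.card

lemma measurable_shift : Measurable shift :=
  measurable_pi_lambda _ fun n => measurable_pi_apply (n + 1)

lemma measurable_cons (b : Bool) : Measurable (cons b) := by
  apply measurable_pi_lambda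
  intro n
  cases n with
  | zero => exact measurable_const
  | succ k => exact measurable_pi_apply k

lemma shift_cons (b : Bool) (x : ℕ → Bool) : shift (cons b x) = x := rfl

/-- the collection of point cylinders -/
def Cyls : Set (Set (ℕ → Bool)) :=
  {S | ∃ (s : Finset ℕ) (b : ℕ → Bool), S = {x | ∀ i ∈ s, x i = b i}}

lemma measurableSet_cyl (s : Finset ℕ) (b : ℕ → Bool) :
    MeasurableSet {x : ℕ → Bool | ∀ i ∈ s, x i = b i} := by
  have : {x : ℕ → Bool | ∀ i ∈ s, x i = b i} = ⋂ i ∈ s, {x | x i = b i} := by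
    ext x; simp
  rw [this]
  apply MeasurableSet.biInter s.countable_toSet
  intro i _
  have : {x : ℕ → Bool | x i = b i} = (fun x : ℕ → Bool => x i) ⁻¹' {b i} := by
    ext x; simp
  rw [this]
  exact (measurable_pi_apply i) (measurableSet_singleton (b i))

lemma generateFrom_cyls :
    (inferInstance : MeasurableSpace (ℕ → Bool)) = MeasurableSpace.generateFrom Cyls := by
  apply le_antisymm
  · rw [show (inferInstance : MeasurableSpace (ℕ → Bool)) = MeasurableSpace.pi from rfl,
      MeasurableSpace.pi]
    apply iSup_le
    intro i
    intro S hS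
    obtain ⟨t, -, rfl⟩ := hS
    have : (fun x : ℕ → Bool => x i) ⁻¹' t = ⋃ b ∈ t, {x : ℕ → Bool | ∀ j ∈ ({i} : Finset ℕ), x j = b} := by
      ext x; simp [Set.mem_preimage]
    rw [this]
    apply MeasurableSet.biUnion t.to_countable
    intro b _
    exact MeasurableSpace.measurableSet_generateFrom ⟨{i}, fun _ => b, rfl⟩
  · apply MeasurableSpace.generateFrom_le
    rintro S ⟨s, b, rfl⟩
    exact measurableSet_cyl s b

lemma isPiSystem_cyls : IsPiSystem Cyls := by
  rintro S ⟨s, b, rfl⟩ T ⟨t, c, rfl⟩ hne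
  obtain ⟨y, hy1, hy2⟩ := hne
  refine ⟨s ∪ t, fun i => if i ∈ s then b i else c i, ?_⟩
  ext x
  simp only [Set.mem_inter_iff, Set.mem_setOf_eq, Finset.mem_union]
  constructor
  · rintro ⟨h1, h2⟩ i hi
    by_cases his : i ∈ s
    · simp [his, h1 i his]
    · simp [his, h2 i (hi.resolve_left his)]
  · intro h
    constructor
    · intro i his
      have := h i (Or.inl his); simpa [his] using this
    · intro i hit
      have := h i (Or.inr hit)
      by_cases his : i ∈ s
      · rw [if_pos his] at this
        rw [this]
        rw [← hy1 i his, hy2 i hit]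
      · simpa [his] using this

lemma preimage_cyl (c : Bool) (s : Finset ℕ) (b : ℕ → Bool) (h : 0 ∈ s → c = b 0) :
    cons c ⁻¹' {x | ∀ i ∈ s, x i = b i} =
      {y | ∀ j ∈ (s.erase 0).image (· - 1), y j = b (j + 1)} := by
  ext y
  simp only [Set.mem_preimage, Set.mem_setOf_eq, Finset.mem_image, Finset.mem_erase]
  constructor
  · rintro H j ⟨i, ⟨hi0, his⟩, rfl⟩
    have hi : i = (i - 1) + 1 := by omega
    have := H i his
    rw [hi] at this
    exact this
  · intro H i his
    cases i with
    | zero => exact h his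
    | succ k =>
      have : y k = b (k + 1) := H k ⟨k + 1, ⟨by omega, his⟩, rfl⟩
      exact this

lemma preimage_cyl_empty (c : Bool) (s : Finset ℕ) (b : ℕ → Bool) (h0 : 0 ∈ s)
    (hc : c ≠ b 0) : cons c ⁻¹' {x | ∀ i ∈ s, x i = b i} = ∅ := by
  ext y
  simp only [Set.mem_preimage, Set.mem_setOf_eq, Set.mem_empty_iff_false, iff_false]
  intro H
  exact hc (H 0 h0)

lemma card_image_pred (s : Finset ℕ) :
    ((s.erase 0).image (· - 1)).card = (s.erase 0).card := by
  apply Finset.card_image_of_injOn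
  intro a ha b hb hab
  simp only [Finset.mem_coe, Finset.mem_erase] at ha hb
  simp only at hab
  omega

lemma bernoulli_decomp (μ : Measure (ℕ → Bool)) [IsProbabilityMeasure μ]
    (hμ : IsBernoulliHalf μ) :
    μ = (2⁻¹ : ℝ≥0∞) • Measure.map (cons false) μ + (2⁻¹ : ℝ≥0∞) • Measure.map (cons true) μ := by
  have hmapc : ∀ c : Bool, ∀ S : Set (ℕ → Bool), MeasurableSet S →
      Measure.map (cons c) μ S = μ (cons c ⁻¹' S) := fun c S hS =>
    Measure.map_apply (measurable_cons c) hS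
  have hcylval : ∀ (c : Bool) (s : Finset ℕ) (b : ℕ → Bool), (0 ∈ s → c = b 0) →
      μ (cons c ⁻¹' {x | ∀ i ∈ s, x i = b i}) = (1 / 2 : ℝ≥0∞) ^ (s.erase 0).card := by
    intro c s b h
    rw [preimage_cyl c s b h, hμ, card_image_pred]
  apply MeasureTheory.ext_of_generate_finite Cyls generateFrom_cyls isPiSystem_cyls
  · rintro S ⟨s, b, rfl⟩
    rw [Measure.add_apply, Measure.smul_apply, Measure.smul_apply, smul_eq_mul, smul_eq_mul,
      hmapc false _ (measurableSet_cyl s b), hmapc true _ (measurableSet_cyl s b), hμ]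
    by_cases h0 : 0 ∈ s
    · have hcard : s.card = (s.erase 0).card + 1 := (Finset.card_erase_add_one h0).symm
      cases hb : b 0 with
      | false =>
        rw [hcylval false s b (fun _ => hb.symm), preimage_cyl_empty true s b h0 (by simp [hb]),
          measure_empty, hcard]
        rw [pow_succ, one_div]
        ring
      | true =>
        rw [hcylval true s b (fun _ => hb.symm), preimage_cyl_empty false s b h0 (by simp [hb]),
          measure_empty, hcard]
        rw [pow_succ, one_div]
        ring
    · have he : s.erase 0 = s := Finset.erase_eq_of_notMem h0
      rw [hcylval false s b (fun h => absurd h h0), hcylval true s b (fun h => absurd h h0), he]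
      rw [← add_mul, ENNReal.inv_two_add_inv_two, one_mul]
  · rw [Measure.add_apply, Measure.smul_apply, Measure.smul_apply, smul_eq_mul, smul_eq_mul,
      hmapc false _ MeasurableSet.univ, hmapc true _ MeasurableSet.univ]
    simp [ENNReal.inv_two_add_inv_two]

lemma shift_comp_cons (c : Bool) : shift ∘ cons c = id := rfl

lemma map_shift_eq (μ : Measure (ℕ → Bool)) [IsProbabilityMeasure μ]
    (hμ : IsBernoulliHalf μ) : Measure.map shift μ = μ := by
  conv_lhs => rw [bernoulli_decomp μ hμ]
  rw [Measure.map_add _ _ measurable_shift, Measure.map_smul, Measure.map_smul,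
    Measure.map_map measurable_shift (measurable_cons false),
    Measure.map_map measurable_shift (measurable_cons true),
    shift_comp_cons, shift_comp_cons, Measure.map_id]
  rw [← add_smul, ENNReal.inv_two_add_inv_two, one_smul]

lemma measurePreserving_shift (μ : Measure (ℕ → Bool)) [IsProbabilityMeasure μ]
    (hμ : IsBernoulliHalf μ) : MeasurePreserving shift μ μ :=
  ⟨measurable_shift, map_shift_eq μ hμ⟩

lemma lintegral_decomp (μ : Measure (ℕ → Bool)) [IsProbabilityMeasure μ]
    (hμ : IsBernoulliHalf μ) (φ : (ℕ → Bool) → ℝ≥0∞) (hφ : AEMeasurable φ μ) :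
    ∫⁻ x, φ x ∂μ =
      2⁻¹ * ∫⁻ y, φ (cons false y) ∂μ + 2⁻¹ * ∫⁻ y, φ (cons true y) ∂μ := by
  have hle : ∀ c : Bool, Measure.map (cons c) μ ≤ (2 : ℝ≥0∞) • μ := by
    intro c
    rw [Measure.le_iff']
    intro s
    have hd : μ s = 2⁻¹ * Measure.map (cons false) μ s + 2⁻¹ * Measure.map (cons true) μ s := by
      conv_lhs => rw [bernoulli_decomp μ hμ]
      simp [Measure.add_apply, Measure.smul_apply]
    have h1 : 2⁻¹ * Measure.map (cons c) μ s ≤ μ s := by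
      rw [hd]; cases c
      · exact le_add_right le_rfl
      · exact le_add_left le_rfl
    calc Measure.map (cons c) μ s = 2 * (2⁻¹ * Measure.map (cons c) μ s) := by
          rw [← mul_assoc, ENNReal.mul_inv_cancel (by norm_num) (by norm_num), one_mul]
      _ ≤ 2 * μ s := mul_le_mul_right h1 2
      _ = ((2 : ℝ≥0∞) • μ) s := by simp [Measure.smul_apply]
  have hφc : ∀ c : Bool, AEMeasurable φ (Measure.map (cons c) μ) := by
    intro c
    refine AEMeasurable.mono_measure ?_ (hle c)
    exact (aemeasurable_smul_measure_iff (by norm_num)).2 hφ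
  conv_lhs => rw [bernoulli_decomp μ hμ]
  rw [lintegral_add_measure, lintegral_smul_measure, lintegral_smul_measure,
    lintegral_map' (hφc false) (measurable_cons false).aemeasurable,
    lintegral_map' (hφc true) (measurable_cons true).aemeasurable, smul_eq_mul, smul_eq_mul]

lemma key_identity (μ : Measure (ℕ → Bool)) [IsProbabilityMeasure μ]
    (hμ : IsBernoulliHalf μ) (f : (ℕ → Bool) → ℂ) (hf : Continuous f)
    (lam : ℝ) (hlam : 1 ≤ lam) (g : (ℕ → Bool) → ℂ) (hg : AEStronglyMeasurable g μ) :
    ∫⁻ x, (‖f x * g (shift x)‖₊ : ℝ≥0∞) ^ lam ∂μ =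
      ∫⁻ y, ENNReal.ofReal ((‖f (cons false y)‖ ^ lam + ‖f (cons true y)‖ ^ lam) / 2)
        * (‖g y‖₊ : ℝ≥0∞) ^ lam ∂μ := by
  have hlam0 : (0:ℝ) ≤ lam := le_trans zero_le_one hlam
  have hG : AEMeasurable (fun y => (‖g y‖₊ : ℝ≥0∞) ^ lam) μ := hg.enorm.pow_const lam
  have hGs : AEMeasurable (fun x => (‖g (shift x)‖₊ : ℝ≥0∞) ^ lam) μ :=
    hG.comp_quasiMeasurePreserving (measurePreserving_shift μ hμ).quasiMeasurePreserving
  have hFm : ∀ c : Bool, Measurable (fun y => (‖f (cons c y)‖₊ : ℝ≥0∞) ^ lam) := fun c =>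
    ((hf.measurable.comp (measurable_cons c)).enorm).pow_const lam
  have hpt : ∀ x, (‖f x * g (shift x)‖₊ : ℝ≥0∞) ^ lam =
      (‖f x‖₊ : ℝ≥0∞) ^ lam * (‖g (shift x)‖₊ : ℝ≥0∞) ^ lam := by
    intro x
    rw [nnnorm_mul, ENNReal.coe_mul, ENNReal.mul_rpow_of_nonneg _ _ hlam0]
  simp_rw [hpt]
  rw [lintegral_decomp μ hμ _ (show AEMeasurable (fun x => (‖f x‖₊ : ℝ≥0∞) ^ lam * (‖g (shift x)‖₊ : ℝ≥0∞) ^ lam) μ from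
    (hf.measurable.enorm.pow_const lam).aemeasurable.mul hGs)]
  simp only [shift_cons]
  rw [← lintegral_const_mul' _ _ (by norm_num : (2⁻¹ : ℝ≥0∞) ≠ ⊤),
    ← lintegral_const_mul' _ _ (by norm_num : (2⁻¹ : ℝ≥0∞) ≠ ⊤),
    ← lintegral_add_left' (show AEMeasurable (fun a => 2⁻¹ * ((‖f (cons false a)‖₊ : ℝ≥0∞) ^ lam * (‖g a‖₊ : ℝ≥0∞) ^ lam)) μ from
      aemeasurable_const.mul ((hFm false).aemeasurable.mul hG))]
  apply lintegral_congr
  intro y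
  have hA : ∀ z : ℂ, ((‖z‖₊ : ℝ≥0∞)) ^ lam = ENNReal.ofReal (‖z‖ ^ lam) := by
    intro z
    rw [← enorm_eq_nnnorm, ← ofReal_norm, ENNReal.ofReal_rpow_of_nonneg (norm_nonneg z) hlam0]
  have h2 : (2⁻¹ : ℝ≥0∞) = ENNReal.ofReal 2⁻¹ := by
    rw [ENNReal.ofReal_inv_of_pos (by norm_num), ENNReal.ofReal_ofNat]
  rw [hA (f (cons false y)), hA (f (cons true y))]
  rw [show 2⁻¹ * (ENNReal.ofReal (‖f (cons false y)‖ ^ lam) * (‖g y‖₊ : ℝ≥0∞) ^ lam)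
      + 2⁻¹ * (ENNReal.ofReal (‖f (cons true y)‖ ^ lam) * (‖g y‖₊ : ℝ≥0∞) ^ lam)
      = (2⁻¹ * ENNReal.ofReal (‖f (cons false y)‖ ^ lam)
        + 2⁻¹ * ENNReal.ofReal (‖f (cons true y)‖ ^ lam)) * (‖g y‖₊ : ℝ≥0∞) ^ lam by ring]
  congr 1
  rw [h2, ← ENNReal.ofReal_mul (by norm_num), ← ENNReal.ofReal_mul (by norm_num),
    ← ENNReal.ofReal_add (by positivity) (by positivity)]
  congr 1
  ring

lemma continuous_cons (b : Bool) : Continuous (cons b) := by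
  apply continuous_pi
  intro n
  cases n with
  | zero => exact continuous_const
  | succ k => exact continuous_apply k

/-- For continuous `f` and `1 ≤ λ < ∞`, the operator norm of `M_f K` on `L^λ(μ)`
equals the sup norm of `(L |f|^λ)^{1/λ}`:
`sup_{‖g‖_λ = 1} ‖f · (g∘σ)‖_λ = ‖(L |f|^λ)^{1/λ}‖_∞`. -/
theorem stmt5 (μ : Measure (ℕ → Bool)) (hprob : IsProbabilityMeasure μ)
    (hμ : IsBernoulliHalf μ) (f : (ℕ → Bool) → ℂ) (hf : Continuous f)
    (lam : ℝ) (hlam : 1 ≤ lam) :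
    sSup {E : ℝ≥0∞ | ∃ g : (ℕ → Bool) → ℂ, AEStronglyMeasurable g μ ∧
        eLpNorm g (ENNReal.ofReal lam) μ = 1 ∧
        E = eLpNorm (fun x => f x * g (shift x)) (ENNReal.ofReal lam) μ} =
      ENNReal.ofReal (⨆ x : ℕ → Bool,
        ((‖f (cons false x)‖ ^ lam + ‖f (cons true x)‖ ^ lam) / 2) ^ (1 / lam)) := by
  have hlam0 : (0:ℝ) < lam := lt_of_lt_of_le one_pos hlam
  have hp0 : ENNReal.ofReal lam ≠ 0 := by
    simp only [ne_eq, ENNReal.ofReal_eq_zero, not_le]; exact hlam0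
  have hptop : ENNReal.ofReal lam ≠ ∞ := ENNReal.ofReal_ne_top
  have hpt : (ENNReal.ofReal lam).toReal = lam := ENNReal.toReal_ofReal hlam0.le
  set avg : (ℕ → Bool) → ℝ :=
    fun x => (‖f (cons false x)‖ ^ lam + ‖f (cons true x)‖ ^ lam) / 2 with havg
  set F : (ℕ → Bool) → ℝ := fun x => avg x ^ (1 / lam) with hFdef
  set c : ℝ := ⨆ x, F x with hcdef
  have havg0 : ∀ x, 0 ≤ avg x := by
    intro x; rw [havg]; positivity
  have havg_cont : Continuous avg := by
    apply Continuous.div_const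
    exact (((hf.comp (continuous_cons false)).norm).rpow_const fun x => Or.inr hlam0.le).add
      (((hf.comp (continuous_cons true)).norm).rpow_const fun x => Or.inr hlam0.le)
  have hFcont : Continuous F := havg_cont.rpow_const fun x => Or.inr (by positivity)
  have hbdd : BddAbove (Set.range F) := by
    rw [← Set.image_univ]
    exact (isCompact_univ.image hFcont).bddAbove
  have hF0 : ∀ x, 0 ≤ F x := fun x => Real.rpow_nonneg (havg0 x) _
  have hFc : ∀ x, F x ≤ c := fun x => le_ciSup hbdd x
  have hc0 : 0 ≤ c := le_trans (hF0 fun _ => false) (hFc _)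
  have hFlam : ∀ x, (F x) ^ lam = avg x := by
    intro x
    rw [hFdef]
    rw [← Real.rpow_mul (havg0 x), one_div, inv_mul_cancel₀ (ne_of_gt hlam0), Real.rpow_one]
  apply le_antisymm
  · -- upper bound
    apply sSup_le
    rintro E ⟨g, hgm, hgnorm, rfl⟩
    rw [eLpNorm_eq_lintegral_rpow_enorm_toReal hp0 hptop, hpt]
    have hkey := key_identity μ hμ f hf lam hlam g hgm
    simp only [enorm_eq_nnnorm] at hkey ⊢
    rw [hkey]
    have hnorm1 : ∫⁻ y, (‖g y‖₊ : ℝ≥0∞) ^ lam ∂μ = 1 := by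
      rw [eLpNorm_eq_lintegral_rpow_enorm_toReal hp0 hptop, hpt] at hgnorm
      have h2 := congrArg (fun t : ℝ≥0∞ => t ^ lam) hgnorm
      simp only [enorm_eq_nnnorm] at h2
      rwa [← ENNReal.rpow_mul, one_div, inv_mul_cancel₀ (ne_of_gt hlam0), ENNReal.rpow_one,
        ENNReal.one_rpow] at h2
    have hmono : ∫⁻ y, ENNReal.ofReal (avg y) * (‖g y‖₊ : ℝ≥0∞) ^ lam ∂μ
        ≤ ENNReal.ofReal (c ^ lam) * 1 := by
      rw [← hnorm1, ← lintegral_const_mul' _ _ ENNReal.ofReal_ne_top]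
      apply lintegral_mono
      intro y
      apply mul_le_mul_left
      apply ENNReal.ofReal_le_ofReal
      rw [← hFlam y]
      exact Real.rpow_le_rpow (hF0 y) (hFc y) hlam0.le
    calc (∫⁻ y, ENNReal.ofReal (avg y) * (‖g y‖₊ : ℝ≥0∞) ^ lam ∂μ) ^ (1 / lam)
        ≤ (ENNReal.ofReal (c ^ lam) * 1) ^ (1 / lam) :=
          ENNReal.rpow_le_rpow hmono (by positivity)
      _ = ENNReal.ofReal c := by
          rw [mul_one, ENNReal.ofReal_rpow_of_nonneg (by positivity) (by positivity),
            ← Real.rpow_mul hc0, one_div, mul_inv_cancel₀ (ne_of_gt hlam0), Real.rpow_one]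
  · -- lower bound
    apply ENNReal.le_of_forall_pos_le_add
    intro ε hε _
    have hεR : (0:ℝ) < (ε : ℝ) := hε
    have hstep : ENNReal.ofReal (c - ε) ≤ sSup {E : ℝ≥0∞ | ∃ g : (ℕ → Bool) → ℂ,
        AEStronglyMeasurable g μ ∧ eLpNorm g (ENNReal.ofReal lam) μ = 1 ∧
        E = eLpNorm (fun x => f x * g (shift x)) (ENNReal.ofReal lam) μ} := by
      rcases le_or_gt (c - ε) 0 with hce | hce
      · rw [ENNReal.ofReal_eq_zero.2 hce]
        exact bot_le
      · -- main construction
        have hne : (Set.range F).Nonempty := ⟨F fun _ => false, _, rfl⟩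
        have hlt : c - (ε:ℝ) < sSup (Set.range F) := by
          have : c - (ε:ℝ) < c := by linarith
          exact this
        obtain ⟨-, ⟨x₀, rfl⟩, hx₀⟩ := exists_lt_of_lt_csSup hne hlt
        have hU : IsOpen {x | c - (ε:ℝ) < F x} := isOpen_lt continuous_const hFcont
        have hUx : {x | c - (ε:ℝ) < F x} ∈ nhds x₀ := hU.mem_nhds hx₀
        rw [nhds_pi, Filter.mem_pi] at hUx
        obtain ⟨I, hIfin, t, htmem, htsub⟩ := hUx
        obtain ⟨n, hn⟩ : ∃ n, ∀ i ∈ I, i < n := by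
          obtain ⟨m, hm⟩ := hIfin.bddAbove
          exact ⟨m + 1, fun i hi => Nat.lt_succ_of_le (hm hi)⟩
        set A : Set (ℕ → Bool) := {x | ∀ i ∈ Finset.range n, x i = x₀ i} with hA
        have hAmeas := measurableSet_cyl (Finset.range n) x₀
        have hAsub : A ⊆ {x | c - (ε:ℝ) < F x} := by
          intro x hx
          apply htsub
          intro i hi
          have hxi : x i = x₀ i := hx i (Finset.mem_range.2 (hn i hi))
          rw [hxi]
          exact mem_of_mem_nhds (htmem i)
        have hAm : μ A = (1/2 : ℝ≥0∞) ^ n := by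
          rw [hA, hμ (Finset.range n) x₀, Finset.card_range]
        set m : ℝ≥0∞ := μ A with hmdef
        have hm0 : m ≠ 0 := by
          rw [hAm]
          exact pow_ne_zero n (by norm_num)
        have hmtop : m ≠ ∞ := by
          rw [hAm]
          exact ENNReal.pow_ne_top (by norm_num)
        have hmR : 0 < m.toReal := ENNReal.toReal_pos hm0 hmtop
        set k : ℝ := (m.toReal)⁻¹ ^ (1 / lam) with hkdef
        have hk0 : 0 ≤ k := Real.rpow_nonneg (by positivity) _
        set g : (ℕ → Bool) → ℂ := A.indicator fun _ => (k : ℂ) with hgdef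
        have hgmeas : AEStronglyMeasurable g μ :=
          (measurable_const.indicator hAmeas).aestronglyMeasurable
        have hknn : (‖(k : ℂ)‖₊ : ℝ≥0∞) = m⁻¹ ^ (1 / lam) := by
          rw [← enorm_eq_nnnorm, ← ofReal_norm, Complex.norm_real, Real.norm_eq_abs,
            abs_of_nonneg hk0, hkdef,
            ← ENNReal.ofReal_rpow_of_nonneg (by positivity) (by positivity),
            ENNReal.ofReal_inv_of_pos hmR, ENNReal.ofReal_toReal hmtop]
        have hgnorm : eLpNorm g (ENNReal.ofReal lam) μ = 1 := by
          rw [hgdef, eLpNorm_indicator_const hAmeas hp0 hptop, enorm_eq_nnnorm, hknn, hpt, ← hmdef,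
            ← ENNReal.mul_rpow_of_nonneg _ _ (by positivity),
            ENNReal.inv_mul_cancel hm0 hmtop, ENNReal.one_rpow]
        refine le_trans ?_ (le_sSup ⟨g, hgmeas, hgnorm, rfl⟩)
        rw [eLpNorm_eq_lintegral_rpow_enorm_toReal hp0 hptop, hpt]
        simp only [enorm_eq_nnnorm]
        rw [
          key_identity μ hμ f hf lam hlam g hgmeas]
        have hklam : (m⁻¹ ^ (1/lam) : ℝ≥0∞) ^ lam = m⁻¹ := by
          rw [← ENNReal.rpow_mul, one_div, inv_mul_cancel₀ (ne_of_gt hlam0), ENNReal.rpow_one]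
        have hind : ∀ y, ENNReal.ofReal (avg y) * (‖g y‖₊ : ℝ≥0∞) ^ lam =
            A.indicator (fun y => ENNReal.ofReal (avg y) * m⁻¹) y := by
          intro y
          by_cases hy : y ∈ A
          · rw [Set.indicator_of_mem hy, hgdef, Set.indicator_of_mem hy, hknn, hklam]
          · rw [Set.indicator_of_notMem hy, hgdef, Set.indicator_of_notMem hy]
            simp [ENNReal.zero_rpow_of_pos hlam0]
        rw [lintegral_congr hind, lintegral_indicator hAmeas]
        have hbound : ENNReal.ofReal ((c - ε) ^ lam)
            ≤ ∫⁻ y in A, ENNReal.ofReal (avg y) * m⁻¹ ∂μ := by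
          have h1 : ∫⁻ _ in A, ENNReal.ofReal ((c - ε) ^ lam) * m⁻¹ ∂μ
              = ENNReal.ofReal ((c - ε) ^ lam) := by
            rw [setLIntegral_const, ← hmdef, mul_assoc, ENNReal.inv_mul_cancel hm0 hmtop, mul_one]
          rw [← h1]
          apply setLIntegral_mono' hAmeas
          intro y hy
          apply mul_le_mul_left
          apply ENNReal.ofReal_le_ofReal
          rw [← hFlam y]
          exact Real.rpow_le_rpow hce.le (hAsub hy).le hlam0.le
        calc ENNReal.ofReal (c - ε)
            = (ENNReal.ofReal ((c - ε) ^ lam)) ^ (1 / lam) := by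
              rw [ENNReal.ofReal_rpow_of_nonneg (by positivity) (by positivity),
                ← Real.rpow_mul hce.le, one_div, mul_inv_cancel₀ (ne_of_gt hlam0),
                Real.rpow_one]
          _ ≤ (∫⁻ y in A, ENNReal.ofReal (avg y) * m⁻¹ ∂μ) ^ (1 / lam) :=
              ENNReal.rpow_le_rpow hbound (by positivity)
    calc ENNReal.ofReal c = ENNReal.ofReal ((c - (ε:ℝ)) + (ε:ℝ)) := by rw [sub_add_cancel]
      _ ≤ ENNReal.ofReal (c - (ε:ℝ)) + ENNReal.ofReal (ε:ℝ) := ENNReal.ofReal_add_le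
      _ ≤ _ + (ε:ℝ≥0∞) := add_le_add hstep (le_of_eq ENNReal.ofReal_coe_nnreal)
end
end

section
/- Let x, y ∈ Ω = {0,1}^ℕ and N ∈ ℕ. If sup_n |#{i ≤ n : x_i = 1} − #{i ≤ n : y_i = 1}| ≥ N, then for every C > 0 there exists a continuous f : Ω → ℝ with ‖f∘σ − f‖_∞ ≤ 1 and |f(x) − f(y)| ≥ N. In particular, sup over all continuous f with ‖f∘σ−f‖_∞ ≤ 1 of |f(x)−f(y)| is ≥ N. -/
open ENNReal

noncomputable section

/-- `#{i ≤ n : x_i = 1}`, the number of `1`'s among the first `n+1` coordinates. -/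
def onesCount (n : ℕ) (x : ℕ → Bool) : ℕ :=
  ((Finset.range (n + 1)).filter fun i => x i = true).card

lemma onesCount_succ (n : ℕ) (z : ℕ → Bool) :
    onesCount (n + 1) z = onesCount n z + (if z (n + 1) then 1 else 0) := by
  unfold onesCount
  rw [Finset.range_add_one, Finset.filter_insert]
  split <;> simp [Finset.card_insert_of_notMem]

lemma onesCount_shift (n : ℕ) (z : ℕ → Bool) :
    onesCount n (shift z) + (if z 0 then 1 else 0)
      = onesCount n z + (if z (n + 1) then 1 else 0) := by
  induction n with
  | zero =>
    unfold onesCount shift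
    cases h0 : z 0 <;> cases h1 : z 1 <;>
      simp [Finset.filter_singleton, h0, h1]
  | succ n ih =>
    rw [onesCount_succ, onesCount_succ]
    simp only [shift, show n + 1 + 1 = n + 2 from rfl] at ih ⊢
    omega

lemma onesCount_continuous (n : ℕ) :
    Continuous fun z : ℕ → Bool => (onesCount n z : ℝ) := by
  have heq : (fun z : ℕ → Bool => (onesCount n z : ℝ))
      = fun z => ∑ i ∈ Finset.range (n + 1), (if z i = true then (1 : ℝ) else 0) := by
    funext z
    unfold onesCount
    rw [Finset.card_filter]
    push_cast
    rfl
  rw [heq]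
  apply continuous_finset_sum
  intro i _
  exact (continuous_of_discreteTopology
    (f := fun b : Bool => if b = true then (1 : ℝ) else 0)).comp (continuous_apply i)

/-- If `sup_n |#{i ≤ n : x_i = 1} - #{i ≤ n : y_i = 1}| ≥ N`, then for every
`C > 0` there is a continuous `f` with `‖f∘σ - f‖_∞ ≤ 1` and `|f(x) - f(y)| ≥ N`. -/
theorem stmt11 (x y : ℕ → Bool) (N : ℕ)
    (h : (N : ℝ≥0∞) ≤ ⨆ n : ℕ,
      (((onesCount n x : ℤ) - (onesCount n y : ℤ)).natAbs : ℝ≥0∞)) :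
    ∀ C : ℝ, 0 < C → ∃ f : (ℕ → Bool) → ℝ, Continuous f ∧
      (∀ z, |f (shift z) - f z| ≤ 1) ∧ (N : ℝ) ≤ |f x - f y| := by
  intro C hC
  rcases Nat.eq_zero_or_pos N with hN | hN
  · exact ⟨fun _ => 0, continuous_const, by simp, by simp [hN]⟩
  have hex : ∃ n, N ≤ ((onesCount n x : ℤ) - (onesCount n y : ℤ)).natAbs := by
    by_contra hc
    push_neg at hc
    have hle : (⨆ n : ℕ, (((onesCount n x : ℤ) - (onesCount n y : ℤ)).natAbs : ℝ≥0∞))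
        ≤ ((N - 1 : ℕ) : ℝ≥0∞) := by
      apply iSup_le
      intro n
      exact_mod_cast Nat.le_sub_one_of_lt (hc n)
    have h2 : (N : ℝ≥0∞) ≤ ((N - 1 : ℕ) : ℝ≥0∞) := le_trans h hle
    have := (Nat.cast_le (α := ℝ≥0∞)).mp h2
    omega
  obtain ⟨n, hn⟩ := hex
  refine ⟨fun z => (onesCount n z : ℝ), onesCount_continuous n, ?_, ?_⟩
  · intro z
    have hk := onesCount_shift n z
    have hk' : ((onesCount n (shift z) : ℝ)) + (if z 0 then (1:ℝ) else 0)
        = onesCount n z + (if z (n+1) then 1 else 0) := by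
      exact_mod_cast hk
    rw [abs_le]
    constructor <;> split_ifs at hk' <;> linarith
  · calc (N : ℝ) ≤ (((onesCount n x : ℤ) - (onesCount n y : ℤ)).natAbs : ℝ) := by
          exact_mod_cast hn
      _ = |(onesCount n x : ℝ) - (onesCount n y : ℝ)| := by
          rw [Nat.cast_natAbs]
          push_cast
          ring_nf
end
end
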